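/- arXiv:math/0209347 — 3 statements merged into one kernel-verified Lean document; each statement's English description precedes it below -/
import Mathlib

section
/- Let f(z) = (1/2)·coth(z/2) − 1/z, extended by f(0) = 0. Then f is the logarithmic derivative of j(z) = sinh(z/2)/(z/2) (i.e. f = j'/j wherever j ≠ 0), f is an odd function, and f is analytic on the disc |z| < 2π. -/
/-!
`j(z) = dslope sinh 0 (z/2)` is entire and even, so `j'(0) = 0`; away from `0` the quotient rule
gives `j'/j = (1/2) coth(z/2) - 1/z`. The zeros of `j` are the points `2πik` with `k ≠ 0`, all
outside the disc `|z| < 2π`, so there `f = j'/j` is analytic.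
-/

/-- `j(z) = sinh(z/2)/(z/2)`, with `j(0) = 1`. -/
noncomputable def jfun (z : ℂ) : ℂ := if z = 0 then 1 else Complex.sinh (z / 2) / (z / 2)

/-- `f(z) = (1/2) coth(z/2) - 1/z`, extended by `f(0) = 0`,
where `coth w = cosh w / sinh w`. -/
noncomputable def ffun (z : ℂ) : ℂ :=
  if z = 0 then 0
  else (1 / 2) * (Complex.cosh (z / 2) / Complex.sinh (z / 2)) - 1 / z

open Complex

theorem Function.Even.deriv_zero {𝕜 F : Type*} [NontriviallyNormedField 𝕜] [CharZero 𝕜]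
    [NormedAddCommGroup F] [NormedSpace 𝕜 F] {f : 𝕜 → F} (hf : f.Even) : deriv f 0 = 0 := by
  have h := deriv_comp_neg f (0 : 𝕜)
  simp only [hf.eq, neg_zero] at h
  have : (2 : 𝕜) • deriv f 0 = 0 := by rw [two_smul]; nth_rewrite 1 [h]; exact neg_add_cancel _
  exact (smul_eq_zero.mp this).resolve_left two_ne_zero

theorem Differentiable.analyticOnNhd_logDeriv {f : ℂ → ℂ} (hf : Differentiable ℂ f) :
    AnalyticOnNhd ℂ (logDeriv f) {z | f z ≠ 0} := fun z hz =>
  (hf.analyticAt z).deriv.div (hf.analyticAt z) hz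

theorem sinh_ne_zero_of_norm_lt_pi {w : ℂ} (hw0 : w ≠ 0) (hw : ‖w‖ < Real.pi) : sinh w ≠ 0 := by
  intro h
  obtain ⟨k, hk⟩ := sin_eq_zero_iff.mp (by rw [sin_mul_I, h, zero_mul] : sin (w * I) = 0)
  have hk0 : k ≠ 0 := by
    rintro rfl
    simp_all
  have hnorm : ‖w‖ = |(k : ℝ)| * Real.pi := by
    simpa [abs_of_pos Real.pi_pos] using congrArg norm hk
  have hk1 : (1 : ℝ) ≤ |(k : ℝ)| := by exact_mod_cast Int.one_le_abs hk0
  nlinarith [Real.pi_pos]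

theorem jfun_eq_dslope (z : ℂ) : jfun z = dslope sinh 0 (z / 2) := by
  rcases eq_or_ne z 0 with rfl | hz
  · simp [jfun]
  · have hz2 : z / 2 ≠ 0 := div_ne_zero hz two_ne_zero
    simp [jfun, hz, dslope_of_ne _ hz2, slope_def_field]

theorem differentiable_jfun : Differentiable ℂ jfun := by
  have hdslope : Differentiable ℂ (dslope sinh 0) := by
    rw [← differentiableOn_univ, differentiableOn_dslope Filter.univ_mem]
    exact differentiable_sinh.differentiableOn
  rw [funext jfun_eq_dslope]
  exact hdslope.comp (differentiable_id.div_const 2)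

theorem jfun_even : Function.Even jfun := fun z => by
  simp [jfun, neg_div, div_neg, sinh_neg]

theorem hasDerivAt_jfun {z : ℂ} (hz : z ≠ 0) :
    HasDerivAt jfun ((cosh (z / 2) * (1 / 2) * (z / 2) - sinh (z / 2) * (1 / 2)) / (z / 2) ^ 2) z := by
  have hhalf : HasDerivAt (fun w : ℂ => w / 2) (1 / 2) z := (hasDerivAt_id z).div_const 2
  refine (hhalf.csinh.div hhalf (div_ne_zero hz two_ne_zero)).congr_of_eventuallyEq ?_
  filter_upwards [isOpen_ne.mem_nhds hz] with w hw
  simp [jfun, hw]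

theorem logDeriv_jfun {z : ℂ} (hz : jfun z ≠ 0) : logDeriv jfun z = ffun z := by
  rcases eq_or_ne z 0 with rfl | hz0
  · simp [logDeriv_apply, jfun_even.deriv_zero, ffun]
  · have hsinh : sinh (z / 2) ≠ 0 := fun h => hz (by simp [jfun, hz0, h])
    rw [logDeriv_apply, (hasDerivAt_jfun hz0).deriv]
    simp only [jfun, ffun, if_neg hz0]
    field_simp

theorem ffun_odd : Function.Odd ffun := fun z => by
  rcases eq_or_ne z 0 with rfl | hz
  · simp [ffun]
  · simp only [ffun, if_neg hz, neg_eq_zero, neg_div, sinh_neg, cosh_neg]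
    ring

theorem jfun_ne_zero_of_norm_lt {z : ℂ} (hz : ‖z‖ < 2 * Real.pi) : jfun z ≠ 0 := by
  rcases eq_or_ne z 0 with rfl | hz0
  · simp [jfun]
  · have hsinh : sinh (z / 2) ≠ 0 :=
      sinh_ne_zero_of_norm_lt_pi (div_ne_zero hz0 two_ne_zero) (by rw [norm_div, norm_ofNat]; linarith)
    simp [jfun, hz0, hsinh]

/-- `f` is the logarithmic derivative of `j` (wherever `j ≠ 0`), `f` is odd, and
`f` is analytic on the disc `|z| < 2π`. -/
theorem ffun_logDeriv_odd_analytic :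
    (∀ z : ℂ, jfun z ≠ 0 → ffun z = deriv jfun z / jfun z) ∧
    (∀ z : ℂ, ffun (-z) = - ffun z) ∧
    AnalyticOnNhd ℂ ffun (Metric.ball (0 : ℂ) (2 * Real.pi)) := by
  refine ⟨fun z hz => (logDeriv_jfun hz).symm, ffun_odd, ?_⟩
  have hball : Metric.ball (0 : ℂ) (2 * Real.pi) ⊆ {z | jfun z ≠ 0} := fun z hz =>
    jfun_ne_zero_of_norm_lt (mem_ball_zero_iff.mp hz)
  exact (differentiable_jfun.analyticOnNhd_logDeriv.mono hball).congr Metric.isOpen_ball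
    fun z hz => logDeriv_jfun (hball hz)
end

section
/- For any Lie algebra g over a field k and any linear map φ : g → E into a vector space E, the element λ^g − Σ_a e^a ⊗ φ(e_a) of C^∞(g*) ⊗ Λg* ⊗ ΛE (more precisely, the polynomial-coefficient version) is closed under the differential d^g + Σ_a (∂/∂μ_a) ⊗ φ(e_a), where d^g is the Chevalley–Eilenberg differential of g extended to coefficients in ΛE and λ^g : g* → Λ²g* is the map dual to the Lie bracket. -/
/-!
Write `θ a` for `e^a` in the exterior algebra and `B μ = ∑ μ⁅e_a, e_c⁆ • θ a * θ c`, so that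
`λ^g = -B/2`. By the Leibniz rule and `D = 0` on `E`, the derivative term is exactly `D` of the
mixed part `∑ θ a * φ (e_a)`, so it remains to show `D (B μ) = 0`. Expanding with the Leibniz rule
and contracting against the dual basis turns `D (B μ)` into a multiple of
`∑ μ⁅⁅e_p, e_q⁆, e_r⁆ • θ p θ q θ r - ∑ μ⁅e_p, ⁅e_q, e_r⁆⁆ • θ p θ q θ r`. Both sums vanish: by
Jacobi their coefficients have zero cyclic sum, while `θ p θ q θ r` is invariant under cyclic
permutation and vanishes on the diagonal.
-/

theorem Fintype.sum_eq_zero_of_period_three {α M : Type*} [Fintype α] [AddCommMonoid M]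
    (g : α → α) (hg : ∀ a, g (g (g a)) = a) (f : α → M) (hfix : ∀ a, g a = a → f a = 0)
    (horbit : ∀ a, f a + f (g a) + f (g (g a)) = 0) :
    ∑ a, f a = 0 := by
  classical
  let orbits : Setoid α :=
    { r := fun a x => a = x ∨ a = g x ∨ a = g (g x)
      iseqv :=
        { refl := fun _ => Or.inl rfl
          symm := by grind
          trans := by grind } }
  refine Finset.sum_cancels_of_partition_cancels orbits fun x _ => ?_
  have horbit_eq : Finset.univ.filter (orbits · x) = ({x, g x, g (g x)} : Finset α) := by
    ext a
    simp only [Finset.mem_filter, Finset.mem_univ, true_and, Finset.mem_insert,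
      Finset.mem_singleton]
    rfl
  rw [horbit_eq]
  by_cases hx : g x = x
  · simp [hx, hfix x hx]
  · have hx2 : g (g x) ≠ x := fun h => hx (by simpa only [h] using hg x)
    have hx1 : g (g x) ≠ g x := fun h => hx (by simpa only [h] using hg x)
    rw [Finset.sum_insert (by simp [Ne.symm hx, Ne.symm hx2]),
      Finset.sum_pair (Ne.symm hx1), ← add_assoc, horbit]

namespace ExteriorAlgebra

variable {R M : Type*} [CommRing R] [AddCommGroup M] [Module R M]

theorem ι_mul_ι_mul_ι_cycle (x y z : M) :
    ι R x * ι R y * ι R z = ι R y * ι R z * ι R x := by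
  have hanti : ∀ u v : M, ι R u * ι R v = -(ι R v * ι R u) := fun u v =>
    eq_neg_of_add_eq_zero_left (ι_add_mul_swap u v)
  rw [hanti x y, neg_mul, mul_assoc, hanti x z, mul_neg, neg_neg, ← mul_assoc]

/- Summing the cyclic rotations only gives `3 • ∑ = 0`; splitting the index triples into
rotation orbits also covers characteristic `3`. -/
theorem sum_smul_ι_mul_ι_mul_ι_eq_zero {κ : Type*} [Fintype κ] (v : κ → M)
    (T : κ → κ → κ → R) (hT : ∀ p q r, T p q r + T q r p + T r p q = 0) :
    ∑ p, ∑ q, ∑ r, T p q r • (ι R (v p) * ι R (v q) * ι R (v r)) = 0 := by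
  simp only [← Fintype.sum_prod_type']
  refine Fintype.sum_eq_zero_of_period_three (fun t => (t.2.1, t.2.2, t.1)) (fun _ => rfl)
    _ ?_ ?_
  · rintro ⟨p, q, r⟩ h
    simp only [Prod.mk.injEq] at h
    obtain ⟨rfl, rfl, -⟩ := h
    rw [ι_sq_zero, zero_mul, smul_zero]
  · rintro ⟨p, q, r⟩
    dsimp only
    rw [ι_mul_ι_mul_ι_cycle (v r), ← ι_mul_ι_mul_ι_cycle (v p), ← add_smul, ← add_smul, hT,
      zero_smul]

end ExteriorAlgebra

theorem Module.Basis.sum_apply_smul_map_dualBasis {R L N ι : Type*} [CommRing R]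
    [AddCommGroup L] [Module R L] [AddCommGroup N] [Module R N] [Fintype ι] [DecidableEq ι]
    (b : Module.Basis ι R L) (F : Module.Dual R L →ₗ[R] N) (ν : Module.Dual R L) :
    ∑ a, ν (b a) • F (b.dualBasis a) = F ν := by
  simp_rw [← map_smul, ← map_sum, coe_dualBasis, sum_dual_apply_smul_coord]

namespace LieAlgebra

open ExteriorAlgebra

variable {R L M κ : Type*} [CommRing R] [LieRing L] [LieAlgebra R L] [AddCommGroup M]
  [Module R M] [Fintype κ] [DecidableEq κ] (b : Module.Basis κ R L)
  (j : Module.Dual R L →ₗ[R] M)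

/-- `λ^g` is `-(1/2) • dualBracket`, with `g*` placed among the generators by `j`. -/
noncomputable def dualBracket : Module.Dual R L →ₗ[R] ExteriorAlgebra R M :=
  ∑ a, ∑ c, (Module.Dual.eval R L ⁅b a, b c⁆).smulRight
    (ι R (j (b.dualBasis a)) * ι R (j (b.dualBasis c)))

theorem dualBracket_apply (μ : Module.Dual R L) :
    dualBracket b j μ = ∑ a, ∑ c, μ ⁅b a, b c⁆ •
      (ι R (j (b.dualBasis a)) * ι R (j (b.dualBasis c))) := by
  simp [dualBracket]

theorem sum_dualBracket_comp_ad_flip_mul_eq_zero (μ : Module.Dual R L) :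
    ∑ c, dualBracket b j (μ ∘ₗ (ad R L : L →ₗ[R] Module.End R L).flip (b c)) *
      ι R (j (b.dualBasis c)) = 0 := by
  have jacobi_left (x y z : L) : ⁅⁅x, y⁆, z⁆ + ⁅⁅y, z⁆, x⁆ + ⁅⁅z, x⁆, y⁆ = 0 := by
    rw [← lie_skew ⁅x, y⁆ z, ← lie_skew ⁅y, z⁆ x, ← lie_skew ⁅z, x⁆ y, ← neg_add, ← neg_add,
      lie_jacobi, neg_zero]
  simp only [dualBracket_apply, Finset.sum_mul, smul_mul_assoc, LinearMap.comp_apply,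
    LinearMap.flip_apply, LieHom.coe_toLinearMap, ad_apply]
  rw [Finset.sum_comm]
  simp_rw [Finset.sum_comm (s := (Finset.univ : Finset κ)) (t := Finset.univ)
    (f := fun c q => μ ⁅⁅b _, b q⁆, b c⁆ • _)]
  refine sum_smul_ι_mul_ι_mul_ι_eq_zero _ (fun p q r => μ ⁅⁅b p, b q⁆, b r⁆) fun p q r => ?_
  rw [← map_add, ← map_add, jacobi_left, map_zero]

theorem sum_mul_dualBracket_comp_ad_eq_zero (μ : Module.Dual R L) :
    ∑ a, ι R (j (b.dualBasis a)) * dualBracket b j (μ ∘ₗ ad R L (b a)) = 0 := by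
  simp only [dualBracket_apply, Finset.mul_sum, mul_smul_comm, LinearMap.comp_apply,
    ad_apply, ← mul_assoc]
  refine sum_smul_ι_mul_ι_mul_ι_eq_zero _ (fun p q r => μ ⁅b p, ⁅b q, b r⁆⁆) fun p q r => ?_
  rw [← map_add, ← map_add, lie_jacobi, map_zero]

theorem dualBracket_closed (D : ExteriorAlgebra R M →ₗ[R] ExteriorAlgebra R M) (t : R)
    (hDj : ∀ μ, D (ι R (j μ)) = t • dualBracket b j μ)
    (hLeib : ∀ (w : M) (x : ExteriorAlgebra R M), D (ι R w * x) = D (ι R w) * x - ι R w * D x)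
    (μ : Module.Dual R L) :
    D (dualBracket b j μ) = 0 := by
  have hleft (c : κ) : ∑ a, μ ⁅b a, b c⁆ • dualBracket b j (b.dualBasis a) =
      dualBracket b j (μ ∘ₗ (ad R L : L →ₗ[R] Module.End R L).flip (b c)) := by
    rw [← b.sum_apply_smul_map_dualBasis]; simp
  have hright (a : κ) : ∑ c, μ ⁅b a, b c⁆ • dualBracket b j (b.dualBasis c) =
      dualBracket b j (μ ∘ₗ ad R L (b a)) := by
    rw [← b.sum_apply_smul_map_dualBasis]; simp
  calc D (dualBracket b j μ)
      = t • (∑ c, (∑ a, μ ⁅b a, b c⁆ • dualBracket b j (b.dualBasis a)) *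
            ι R (j (b.dualBasis c)) -
          ∑ a, ι R (j (b.dualBasis a)) *
            ∑ c, μ ⁅b a, b c⁆ • dualBracket b j (b.dualBasis c)) := by
        rw [dualBracket_apply]
        simp only [map_sum, map_smul, hLeib, hDj, smul_mul_assoc, mul_smul_comm, Finset.sum_mul,
          Finset.mul_sum, smul_sub, Finset.sum_sub_distrib, Finset.smul_sum, smul_smul, mul_comm t]
        exact congrArg (· - _) Finset.sum_comm
    _ = 0 := by
        simp_rw [hleft, hright]
        rw [sum_dualBracket_comp_ad_flip_mul_eq_zero, sum_mul_dualBracket_comp_ad_eq_zero,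
          sub_zero, smul_zero]

end LieAlgebra

theorem lambda_element_closed_general {k g E ι : Type*} [Field k] [Fintype ι] [DecidableEq ι]
    [LieRing g] [LieAlgebra k g] [AddCommGroup E] [Module k E]
    (b : Module.Basis ι k g) (φ : g →ₗ[k] E)
    (lam : Module.Dual k g → ExteriorAlgebra k (Module.Dual k g × E))
    (hlam : ∀ μ : Module.Dual k g,
      lam μ = (-(2 : k)⁻¹) • ∑ a, ∑ c, (μ ⁅b a, b c⁆) •
        (ExteriorAlgebra.ι k ((b.dualBasis a, 0) : Module.Dual k g × E) *
          ExteriorAlgebra.ι k ((b.dualBasis c, 0) : Module.Dual k g × E)))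
    (D : ExteriorAlgebra k (Module.Dual k g × E) →ₗ[k]
        ExteriorAlgebra k (Module.Dual k g × E))
    (hDμ : ∀ μ : Module.Dual k g,
      D (ExteriorAlgebra.ι k ((μ, 0) : Module.Dual k g × E)) = lam μ)
    (hDe : ∀ e : E, D (ExteriorAlgebra.ι k ((0, e) : Module.Dual k g × E)) = 0)
    (hLeib : ∀ (w : Module.Dual k g × E) (x : ExteriorAlgebra k (Module.Dual k g × E)),
      D (ExteriorAlgebra.ι k w * x) =
        D (ExteriorAlgebra.ι k w) * x - ExteriorAlgebra.ι k w * D x) :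
    ∀ μ : Module.Dual k g,
      D (lam μ - ∑ a, ExteriorAlgebra.ι k ((b.dualBasis a, 0) : Module.Dual k g × E) *
            ExteriorAlgebra.ι k ((0, φ (b a)) : Module.Dual k g × E))
        + ∑ a, lam (b.dualBasis a) *
            ExteriorAlgebra.ι k ((0, φ (b a)) : Module.Dual k g × E) = 0 := by
  have hlam_eq (μ : Module.Dual k g) :
      lam μ = (-(2 : k)⁻¹) • LieAlgebra.dualBracket b (LinearMap.inl k _ E) μ := by
    rw [hlam, LieAlgebra.dualBracket_apply]
    rfl
  have hD_dualBracket (μ : Module.Dual k g) :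
      D (LieAlgebra.dualBracket b (LinearMap.inl k _ E) μ) = 0 :=
    LieAlgebra.dualBracket_closed b _ D _ (fun ν => (hDμ ν).trans (hlam_eq ν)) hLeib μ
  have hD_mixed (a : ι) :
      D (ExteriorAlgebra.ι k ((b.dualBasis a, 0) : Module.Dual k g × E) *
          ExteriorAlgebra.ι k ((0, φ (b a)) : Module.Dual k g × E)) =
        lam (b.dualBasis a) * ExteriorAlgebra.ι k ((0, φ (b a)) : Module.Dual k g × E) := by
    rw [hLeib, hDμ, hDe, mul_zero, sub_zero]
  intro μ
  rw [map_sub, map_sum, Finset.sum_congr rfl fun a _ => hD_mixed a, sub_add_cancel, hlam_eq,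
    map_smul, hD_dualBracket, smul_zero]

/-- Let `g` be a finite-dimensional Lie algebra over a field `k` with basis `e_a`, dual
basis `e^a`, and `φ : g → E` a linear map.  Work in `Λ(g* × E)` (realizing `Λg* ⊗ ΛE`),
and let `λ^g(μ) = −(1/2) Σ_{a,c} μ([e_a,e_c]) e^a ∧ e^c`.  For any odd derivation `D`
with `D(μ) = λ^g(μ)` for `μ ∈ g*` and `D = 0` on `E`, the element
`λ^g − Σ_a e^a ∧ φ(e_a)` (an affine function of `μ`) is closed under the differential
`D + Σ_a (∂/∂μ_a) φ(e_a)`; since the element is affine in `μ`, the derivative term is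
`Σ_a λ^g(e^a) ∧ φ(e_a)`. -/
theorem lambda_element_closed {k g E ι : Type*} [Field k] [Fintype ι] [DecidableEq ι]
    [LieRing g] [LieAlgebra k g] [AddCommGroup E] [Module k E]
    (b : Module.Basis ι k g) (φ : g →ₗ[k] E)
    (lam : Module.Dual k g → ExteriorAlgebra k (Module.Dual k g × E))
    (hlam : ∀ μ : Module.Dual k g,
      lam μ = (-(2 : k)⁻¹) • ∑ a, ∑ c, (μ ⁅b a, b c⁆) •
        (ExteriorAlgebra.ι k ((b.dualBasis a, 0) : Module.Dual k g × E) *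
          ExteriorAlgebra.ι k ((b.dualBasis c, 0) : Module.Dual k g × E)))
    (D : ExteriorAlgebra k (Module.Dual k g × E) →ₗ[k]
        ExteriorAlgebra k (Module.Dual k g × E))
    (hD1 : D 1 = 0)
    (hDμ : ∀ μ : Module.Dual k g,
      D (ExteriorAlgebra.ι k ((μ, 0) : Module.Dual k g × E)) = lam μ)
    (hDe : ∀ e : E, D (ExteriorAlgebra.ι k ((0, e) : Module.Dual k g × E)) = 0)
    (hLeib : ∀ (w : Module.Dual k g × E) (x : ExteriorAlgebra k (Module.Dual k g × E)),
      D (ExteriorAlgebra.ι k w * x) =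
        D (ExteriorAlgebra.ι k w) * x - ExteriorAlgebra.ι k w * D x) :
    ∀ μ : Module.Dual k g,
      D (lam μ - ∑ a, ExteriorAlgebra.ι k ((b.dualBasis a, 0) : Module.Dual k g × E) *
            ExteriorAlgebra.ι k ((0, φ (b a)) : Module.Dual k g × E))
        + ∑ a, lam (b.dualBasis a) *
            ExteriorAlgebra.ι k ((0, φ (b a)) : Module.Dual k g × E) = 0 :=
  lambda_element_closed_general b φ lam hlam D hDμ hDe hLeib
end

section
/- If λ ∈ Λ²V is a non-degenerate bivector on a finite-dimensional vector space V (i.e. the associated map V* → V is invertible), then for every α ∈ ΛV there is a unique β ∈ ΛV with α = ι_β exp(λ), where ι_β denotes contraction of ΛV* ≅ ΛV (via a fixed identification) against exp(λ); i.e. the operator β ↦ ι_β exp(λ) is a linear isomorphism of ΛV. -/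
/-!
Write `e = exp λ` and `m v = ι_{B v} λ`, a vector because `λ` has degree two. Contraction is a
derivation and `λ` is even, so `ι_{B v} (y e) = m v ∧ y e + (ι_{B v} y) e`. Hence `ι_β e = Φ β ∧ e`,
where `Φ` is the automorphism of `ΛV` induced by `m` followed by the change-of-form isomorphism
`ΛV ≃ ΛV` (Bourbaki's `λ_C`) for the bilinear form `C = -(B ∘ m⁻¹)`; the latter exists because `C`
is alternating, as `ι_{B v} ι_{B v} λ = 0`. Both factors of `Φ` are bijective when `λ` is
non-degenerate, and `e` is a unit because `λ` is nilpotent.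
-/

section
variable {V : Type*} [AddCommGroup V] [Module ℝ V]

/-- The extension of contraction (via the identification `V ≅ V*` by `B`) to an algebra
morphism `ΛV → End(ΛV)`, `β ↦ ι_β`. -/
noncomputable def contractionMap (B : LinearMap.BilinForm ℝ V) :
    ExteriorAlgebra ℝ V →ₐ[ℝ] Module.End ℝ (ExteriorAlgebra ℝ V) :=
  CliffordAlgebra.lift (0 : QuadraticForm ℝ V)
    ⟨(CliffordAlgebra.contractLeft (Q := (0 : QuadraticForm ℝ V))).comp B,
      fun m => by
        ext x
        simp [Module.End.mul_apply, CliffordAlgebra.contractLeft_contractLeft]⟩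

/-- Truncated (hence genuine, by nilpotency) exponential in `ΛV`. -/
noncomputable def expExt (N : ℕ) (x : ExteriorAlgebra ℝ V) : ExteriorAlgebra ℝ V :=
  ∑ n ∈ Finset.range (N + 1), ((n.factorial : ℝ)⁻¹) • x ^ n

namespace ExteriorAlgebra

section CommRing

variable {R M : Type*} [CommRing R] [AddCommGroup M] [Module R M]

open CliffordAlgebra (contractLeft contractLeft_ι_mul contractLeft_ι)

@[elab_as_elim]
theorem exteriorPower_two_induction {C : ExteriorAlgebra R M → Prop} {x : ExteriorAlgebra R M}
    (hx : x ∈ ⋀[R]^2 M) (ι_mul_ι : ∀ a b : M, C (ι R a * ι R b))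
    (add : ∀ x y, C x → C y → C (x + y)) : C x := by
  rw [exteriorPower, sq] at hx
  refine Submodule.mul_induction_on hx ?_ add
  rintro _ ⟨a, rfl⟩ _ ⟨b, rfl⟩
  exact ι_mul_ι a b

theorem ι_mul_ι_anticomm (a b : M) : ι R a * ι R b = -(ι R b * ι R a) :=
  eq_neg_of_add_eq_zero_left (ι_add_mul_swap a b)

theorem commute_ι_of_mem_exteriorPower_two {x : ExteriorAlgebra R M} (hx : x ∈ ⋀[R]^2 M)
    (w : M) : Commute (ι R w) x := by
  refine exteriorPower_two_induction hx (fun a b => ?_) fun _ _ hx hy => hx.add_right hy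
  simp only [Commute, SemiconjBy, ← mul_assoc, ι_mul_ι_anticomm w a, neg_mul]
  rw [mul_assoc, ι_mul_ι_anticomm w b, mul_neg, neg_neg, mul_assoc]

theorem contractLeft_ι_mul_ι (d : Module.Dual R M) (a b : M) :
    contractLeft d (ι R a * ι R b) = d a • ι R b - d b • ι R a := by
  rw [contractLeft_ι_mul, contractLeft_ι, ← Algebra.commutes, ← Algebra.smul_def]

theorem ι_ιInv_contractLeft {x : ExteriorAlgebra R M} (hx : x ∈ ⋀[R]^2 M) (d : Module.Dual R M) :
    ι R (ιInv (contractLeft d x)) = contractLeft d x := by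
  refine exteriorPower_two_induction hx (fun a b => ?_) fun _ _ hx hy => ?_
  · rw [contractLeft_ι_mul_ι, ← map_smul, ← map_smul, ← map_sub, ι_leftInverse]
  · rw [map_add, map_add, map_add, hx, hy]

theorem contractLeft_mul_of_mem_exteriorPower_two {x : ExteriorAlgebra R M}
    (hx : x ∈ ⋀[R]^2 M) (d : Module.Dual R M) (y : ExteriorAlgebra R M) :
    contractLeft d (x * y) = contractLeft d x * y + x * contractLeft d y := by
  refine exteriorPower_two_induction hx (fun a b => ?_) fun _ _ h₁ h₂ => ?_
  · rw [mul_assoc, contractLeft_ι_mul, contractLeft_ι_mul, contractLeft_ι_mul_ι, mul_sub,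
      mul_smul_comm, ← mul_assoc, sub_mul, smul_mul_assoc, smul_mul_assoc]
    abel
  · simp only [add_mul, map_add, h₁, h₂]
    abel

theorem contractLeft_pow_succ_of_mem_exteriorPower_two {x : ExteriorAlgebra R M}
    (hx : x ∈ ⋀[R]^2 M) (d : Module.Dual R M) (n : ℕ) :
    contractLeft d (x ^ (n + 1)) = (n + 1) • (contractLeft d x * x ^ n) := by
  induction n with
  | zero => simp
  | succ n ih =>
    have hcomm : Commute x (contractLeft d x) := by
      rw [← ι_ιInv_contractLeft hx d]
      exact (commute_ι_of_mem_exteriorPower_two hx _).symm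
    rw [pow_succ' x (n + 1), contractLeft_mul_of_mem_exteriorPower_two hx, ih, mul_smul_comm,
      ← mul_assoc, hcomm.eq, mul_assoc, ← pow_succ', succ_nsmul' _ (n + 1)]

theorem contractLeft_mul_of_contractLeft_eq_ι_mul {d : Module.Dual R M} {w : M}
    {e : ExteriorAlgebra R M} (he : contractLeft d e = ι R w * e) (y : ExteriorAlgebra R M) :
    contractLeft d (y * e) = ι R w * (y * e) + contractLeft d y * e := by
  induction y using CliffordAlgebra.left_induction with
  | algebraMap r =>
    rw [← Algebra.smul_def, map_smul, he, CliffordAlgebra.contractLeft_algebraMap, zero_mul,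
      add_zero, mul_smul_comm]
  | add y₁ y₂ h₁ h₂ =>
    rw [add_mul, map_add, h₁, h₂, map_add, add_mul, mul_add]
    abel
  | ι_mul y u ih =>
    rw [mul_assoc, contractLeft_ι_mul, ih, contractLeft_ι_mul, mul_add, ← mul_assoc (ι R u),
      ι_mul_ι_anticomm u w, sub_mul, smul_mul_assoc]
    simp only [mul_assoc, neg_mul]
    abel

/-- For a bivector `x`, the map `v ↦ ι_{B v} x`, read as a vector: `x` is non-degenerate when
this map is bijective. -/
noncomputable def bivectorSharp (B : LinearMap.BilinForm R M) (x : ExteriorAlgebra R M) :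
    M →ₗ[R] M :=
  ιInv ∘ₗ (contractLeft (Q := 0)).flip x ∘ₗ B

theorem map_bijective {f : M →ₗ[R] M} (hf : Function.Bijective f) :
    Function.Bijective (map f) :=
  ⟨map_injective ⟨(LinearEquiv.ofBijective f hf).symm.toLinearMap,
      LinearMap.ext (LinearEquiv.ofBijective f hf).symm_apply_apply⟩,
    map_surjective_iff.mpr hf.2⟩

variable {B : LinearMap.BilinForm R M} {x : ExteriorAlgebra R M}

theorem ι_bivectorSharp (hx : x ∈ ⋀[R]^2 M) (v : M) :
    ι R (bivectorSharp B x v) = contractLeft (B v) x :=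
  ι_ιInv_contractLeft hx (B v)

theorem apply_bivectorSharp_self (hx : x ∈ ⋀[R]^2 M) (v : M) : B v (bivectorSharp B x v) = 0 := by
  rw [← algebraMap_eq_zero_iff (M := M), ← contractLeft_ι, ι_bivectorSharp hx,
    CliffordAlgebra.contractLeft_contractLeft]

theorem toQuadraticMap_neg_comp_bivectorSharp_symm (hx : x ∈ ⋀[R]^2 M)
    (hB : Function.Bijective (bivectorSharp B x)) :
    LinearMap.BilinMap.toQuadraticMap (-(B ∘ₗ (LinearEquiv.ofBijective _ hB).symm.toLinearMap)) =
      (0 : QuadraticForm R M) - 0 := by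
  ext w
  obtain ⟨v, rfl⟩ := hB.2 w
  have hv : (LinearEquiv.ofBijective _ hB).symm (bivectorSharp B x v) = v :=
    (LinearEquiv.ofBijective _ hB).symm_apply_apply v
  simp [hv, apply_bivectorSharp_self hx]

end CommRing

section Field

variable {K E : Type*} [Field K] [AddCommGroup E] [Module K E] [FiniteDimensional K E]

theorem eq_zero_of_mem_exteriorPower {n : ℕ} {x : ExteriorAlgebra K E} (hx : x ∈ ⋀[K]^n E)
    (hn : Module.finrank K E < n) : x = 0 := by
  have hbot : ⋀[K]^n E = ⊥ := by
    rw [← Submodule.finrank_eq_zero, exteriorPower.finrank_eq, Nat.choose_eq_zero_of_lt hn]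
  rwa [hbot, Submodule.mem_bot] at hx

theorem isNilpotent_of_mem_exteriorPower {n : ℕ} {x : ExteriorAlgebra K E}
    (hx : x ∈ ⋀[K]^(n + 1) E) : IsNilpotent x :=
  ⟨Module.finrank K E + 1, eq_zero_of_mem_exteriorPower (SetLike.pow_mem_graded _ hx)
    (by rw [smul_eq_mul]; nlinarith)⟩

end Field

end ExteriorAlgebra

open ExteriorAlgebra

theorem isUnit_expExt {x : ExteriorAlgebra ℝ V} (hx : IsNilpotent x) (N : ℕ) :
    IsUnit (expExt N x) := by
  set w := ∑ n ∈ Finset.range N, ((n + 1).factorial : ℝ)⁻¹ • x ^ n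
  have hexp : expExt N x = x * w + 1 := by
    rw [expExt, Finset.sum_range_succ', Finset.mul_sum]
    simp only [pow_succ', mul_smul_comm, Nat.factorial_zero, Nat.cast_one, inv_one, pow_zero,
      one_smul]
  have hcomm : Commute x w :=
    Commute.sum_right _ _ _ fun n _ => ((Commute.refl x).pow_right n).smul_right _
  rw [hexp]
  exact (hcomm.isNilpotent_mul_right hx).isUnit_add_one

theorem contractLeft_expExt [FiniteDimensional ℝ V] {x : ExteriorAlgebra ℝ V}
    (hx : x ∈ ⋀[ℝ]^2 V) {N : ℕ} (hN : Module.finrank ℝ V ≤ N) (d : Module.Dual ℝ V) :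
    CliffordAlgebra.contractLeft d (expExt N x) =
      CliffordAlgebra.contractLeft d x * expExt N x := by
  set c := CliffordAlgebra.contractLeft d x with hc_def
  have hc : c * x ^ N = 0 := by
    refine eq_zero_of_mem_exteriorPower (n := 1 + N • 2) (SetLike.mul_mem_graded ?_
      (SetLike.pow_mem_graded N hx)) (by rw [smul_eq_mul]; omega)
    rw [hc_def, ← ι_ιInv_contractLeft hx d, pow_one]
    exact LinearMap.mem_range_self _ _
  have hterm (n : ℕ) : ((n + 1).factorial : ℝ)⁻¹ • CliffordAlgebra.contractLeft d (x ^ (n + 1)) =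
      (n.factorial : ℝ)⁻¹ • (c * x ^ n) := by
    rw [contractLeft_pow_succ_of_mem_exteriorPower_two hx, ← Nat.cast_smul_eq_nsmul ℝ, smul_smul,
      Nat.factorial_succ]
    congr 1
    have := Nat.factorial_ne_zero n
    push_cast
    field_simp
  rw [expExt, map_sum, Finset.sum_range_succ', Finset.mul_sum, Finset.sum_range_succ]
  simp only [map_smul, hterm, pow_zero, CliffordAlgebra.contractLeft_one, smul_zero, add_zero,
    mul_smul_comm, hc]

theorem contractionMap_ι (B : LinearMap.BilinForm ℝ V) (v : V) :
    contractionMap B (ExteriorAlgebra.ι ℝ v) = CliffordAlgebra.contractLeft (B v) :=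
  CliffordAlgebra.lift_ι_apply _ _ v

section NondegenerateBivector

variable [FiniteDimensional ℝ V] {B : LinearMap.BilinForm ℝ V} {x : ExteriorAlgebra ℝ V} {N : ℕ}

theorem contractionMap_apply_expExt (hx : x ∈ ⋀[ℝ]^2 V) (hN : Module.finrank ℝ V ≤ N)
    (hB : Function.Bijective (bivectorSharp B x)) (β : ExteriorAlgebra ℝ V) :
    contractionMap B β (expExt N x) =
      CliffordAlgebra.changeForm (toQuadraticMap_neg_comp_bivectorSharp_symm hx hB)
        (map (bivectorSharp B x) β) * expExt N x := by
  induction β using CliffordAlgebra.left_induction with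
  | algebraMap r =>
    rw [AlgHom.commutes, AlgHom.commutes, CliffordAlgebra.changeForm_algebraMap,
      Module.algebraMap_end_apply, Algebra.smul_def]
  | add β₁ β₂ h₁ h₂ => rw [map_add, LinearMap.add_apply, h₁, h₂, map_add, map_add, add_mul]
  | ι_mul β v ih =>
    have he : CliffordAlgebra.contractLeft (B v) (expExt N x) =
        ι ℝ (bivectorSharp B x v) * expExt N x := by
      rw [contractLeft_expExt hx hN, ι_bivectorSharp hx]
    have hC : (-(B ∘ₗ (LinearEquiv.ofBijective _ hB).symm.toLinearMap)) (bivectorSharp B x v) =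
        -B v := by
      simp only [LinearMap.neg_apply, LinearMap.comp_apply, LinearEquiv.coe_coe]
      rw [← LinearEquiv.ofBijective_apply (hf := hB), LinearEquiv.symm_apply_apply]
    rw [map_mul, Module.End.mul_apply, ih, contractionMap_ι,
      contractLeft_mul_of_contractLeft_eq_ι_mul he, map_mul, map_apply_ι,
      CliffordAlgebra.changeForm_ι_mul, hC, map_neg, LinearMap.neg_apply, sub_neg_eq_add, add_mul,
      mul_assoc]

theorem bijective_contractionMap_expExt (hx : x ∈ ⋀[ℝ]^2 V) (hN : Module.finrank ℝ V ≤ N)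
    (hB : Function.Bijective (bivectorSharp B x)) :
    Function.Bijective fun β => contractionMap B β (expExt N x) := by
  obtain ⟨u, hu⟩ := isUnit_expExt (isNilpotent_of_mem_exteriorPower hx) N
  have hfun : (fun β => contractionMap B β (expExt N x)) =
      (fun y : ExteriorAlgebra ℝ V => y * ↑u) ∘
      CliffordAlgebra.changeFormEquiv (toQuadraticMap_neg_comp_bivectorSharp_symm hx hB) ∘
      map (bivectorSharp B x) := by
    ext β
    simp only [Function.comp_apply, CliffordAlgebra.changeFormEquiv_apply, hu,
      contractionMap_apply_expExt hx hN hB]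
  rw [hfun]
  exact (Units.mulRight_bijective u).comp ((LinearEquiv.bijective _).comp (map_bijective hB))

end NondegenerateBivector

namespace ExteriorAlgebra

variable {K E n : Type*} [Field K] [AddCommGroup E] [Module K E] [Fintype n]

open Matrix

noncomputable def matrixBivector (bs : Module.Basis n K E) (L : Matrix n n K) :
    ExteriorAlgebra K E :=
  (2 : K)⁻¹ • ∑ a, ∑ b, L a b • (ι K (bs a) * ι K (bs b))

theorem matrixBivector_mem (bs : Module.Basis n K E) (L : Matrix n n K) :
    matrixBivector bs L ∈ ⋀[K]^2 E := by
  refine Submodule.smul_mem _ _ <| Submodule.sum_mem _ fun a _ => Submodule.sum_mem _ fun b _ =>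
    Submodule.smul_mem _ _ ?_
  rw [exteriorPower, sq]
  exact Submodule.mul_mem_mul (LinearMap.mem_range_self _ _) (LinearMap.mem_range_self _ _)

theorem contractLeft_matrixBivector [NeZero (2 : K)] (bs : Module.Basis n K E) {L : Matrix n n K}
    (hL : Lᵀ = -L) (d : Module.Dual K E) :
    CliffordAlgebra.contractLeft d (matrixBivector bs L) =
      ι K (∑ b, ((fun a => d (bs a)) ᵥ* L) b • bs b) := by
  set S := ∑ a, ∑ b, L a b • d (bs a) • ι K (bs b)
  have hswap : ∑ a, ∑ b, L a b • d (bs b) • ι K (bs a) = -S := by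
    rw [Finset.sum_comm, ← Finset.sum_neg_distrib]
    refine Finset.sum_congr rfl fun a _ => ?_
    rw [← Finset.sum_neg_distrib]
    refine Finset.sum_congr rfl fun b _ => ?_
    rw [← neg_smul, ← Matrix.neg_apply, ← hL, Matrix.transpose_apply]
  have hS : ι K (∑ b, ((fun a => d (bs a)) ᵥ* L) b • bs b) = S := by
    simp only [Matrix.vecMul, dotProduct, map_sum, map_smul, Finset.sum_smul, smul_smul, S]
    rw [Finset.sum_comm]
    simp only [mul_comm]
  rw [hS, matrixBivector, map_smul, map_sum]
  simp only [map_sum, map_smul, contractLeft_ι_mul_ι, smul_sub, Finset.sum_sub_distrib]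
  rw [hswap]
  change (2 : K)⁻¹ • S - (2 : K)⁻¹ • -S = S
  rw [smul_neg, sub_neg_eq_add, ← smul_add, ← two_smul K S, smul_smul, inv_mul_cancel₀ two_ne_zero,
    one_smul]

theorem bivectorSharp_matrixBivector [NeZero (2 : K)] {B : LinearMap.BilinForm K E}
    (bs : Module.Basis n K E) {L : Matrix n n K} (hL : Lᵀ = -L) (v : E) :
    bivectorSharp B (matrixBivector bs L) v = ∑ b, ((fun a => B v (bs a)) ᵥ* L) b • bs b := by
  rw [← ι_inj K, ι_bivectorSharp (matrixBivector_mem bs L), contractLeft_matrixBivector bs hL]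

theorem bijective_bivectorSharp_matrixBivector [NeZero (2 : K)] [FiniteDimensional K E]
    [DecidableEq n] {B : LinearMap.BilinForm K E} (hB : B.Nondegenerate) (bs : Module.Basis n K E)
    {L : Matrix n n K} (hL : Lᵀ = -L) (hLu : IsUnit L) :
    Function.Bijective (bivectorSharp B (matrixBivector bs L)) := by
  have hinj : Function.Injective (bivectorSharp B (matrixBivector bs L)) := by
    refine (injective_iff_map_eq_zero _).2 fun v hv => hB.1 v fun w => ?_
    rw [bivectorSharp_matrixBivector bs hL] at hv
    have hvecMul : (fun a => B v (bs a)) ᵥ* L = 0 ᵥ* L := by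
      rw [← bs.repr_sum_self ((fun a => B v (bs a)) ᵥ* L), hv, zero_vecMul, map_zero,
        Finsupp.coe_zero]
    have hBv : B v = 0 :=
      bs.ext fun a => congrFun (Matrix.vecMul_injective_iff_isUnit.2 hLu hvecMul) a
    rw [hBv, LinearMap.zero_apply]
  exact ⟨hinj, LinearMap.injective_iff_surjective.1 hinj⟩

end ExteriorAlgebra

/-- If `λ ∈ Λ²V` is a nondegenerate bivector (written `λ = (1/2) Σ L^{ab} e_a ∧ e_b`
with `L` an invertible antisymmetric coefficient matrix in a basis `e_a`), then for
every `α ∈ ΛV` there is a unique `β ∈ ΛV` with `ι_β exp(λ) = α`; here `ι` is contraction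
of `ΛV` against itself via a fixed nondegenerate bilinear form `B`. -/
theorem contraction_exp_bijective {ι : Type*} [Fintype ι] [DecidableEq ι]
    [FiniteDimensional ℝ V]
    (B : LinearMap.BilinForm ℝ V) (hB : B.Nondegenerate)
    (bs : Module.Basis ι ℝ V) (L : Matrix ι ι ℝ) (hL : L.transpose = -L) (hLu : IsUnit L) :
    ∀ α : ExteriorAlgebra ℝ V, ∃! β : ExteriorAlgebra ℝ V,
      contractionMap B β (expExt (Fintype.card ι) ((2 : ℝ)⁻¹ • ∑ a, ∑ b,
        L a b • (ExteriorAlgebra.ι ℝ (bs a) * ExteriorAlgebra.ι ℝ (bs b)))) = α :=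
  (bijective_contractionMap_expExt (matrixBivector_mem bs L)
    (Module.finrank_eq_card_basis bs).le
    (bijective_bivectorSharp_matrixBivector hB bs hL hLu)).existsUnique

end
end
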